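/- arXiv:2511.10576 — 6 statements merged into one kernel-verified Lean document; each statement's English description precedes it below -/
import Mathlib

section
/- The convex hull of the $\ell_0$-ball $\mathcal{B}_0^t(\bar{x})$ equals the intersection $\mathcal{D} \cap \widetilde{\mathcal{B}}_1^t(\bar{x})$ of the box $\mathcal{D}$ with the asymmetrically scaled $\ell_1$-ball. -/
/-!
On the box, `δᵢ(y)` is a convex function of `yᵢ` with values in `[0, 1]`, vanishing at `x̄ᵢ`; this
gives `conv B₀ᵗ(x̄) ⊆ D ∩ B̃₁ᵗ(x̄)`. Conversely, `y` is the image of `u = (δᵢ(y))ᵢ` under the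
coordinatewise affine map `uᵢ ↦ x̄ᵢ + uᵢ (eᵢ - x̄ᵢ)`, where `eᵢ` is the endpoint of `[aᵢ, bᵢ]` on the
side of `yᵢ`, and this map sends the points of `[0,1]ᵏ` with at most `t` nonzero coordinates into
`B₀ᵗ(x̄)`. So it suffices that the capped simplex `{u ∈ [0,1]ᵏ | ∑ uᵢ ≤ t}` lies in the convex
hull of those sparse points. If `u` has two coordinates in `(0,1)`, shifting mass between them in
either direction until one of them reaches `{0,1}` writes `u` as a convex combination of two points
of the capped simplex with fewer fractional coordinates. If at most one coordinate is fractional,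
`∑ uᵢ ≤ t` with `t` an integer already bounds the number of nonzero coordinates by `t`.
-/

open scoped ENNReal

noncomputable def deltaE {k : ℕ} (a b x : Fin k → ℝ) (i : Fin k) (y : Fin k → ℝ) : ℝ≥0∞ :=
  if y i = x i then 0
  else if x i < y i then (if b i = x i then ⊤ else ENNReal.ofReal ((y i - x i) / (b i - x i)))
  else (if a i = x i then ⊤ else ENNReal.ofReal ((y i - x i) / (a i - x i)))

open Finset

def l0Ball {ι : Type*} [Fintype ι] (a b x : ι → ℝ) (t : ℕ) : Set (ι → ℝ) :=
  {y | (∀ i, y i ∈ Set.Icc (a i) (b i)) ∧ #{i | y i ≠ x i} ≤ t}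

section CappedSimplex

lemma mem_segment_add_smul_sub_smul {E : Type*} [AddCommGroup E] [Module ℝ E] (u d : E)
    {s₁ s₂ : ℝ} (h₁ : 0 < s₁) (h₂ : 0 < s₂) : u ∈ segment ℝ (u + s₁ • d) (u - s₂ • d) := by
  refine ⟨s₂ / (s₁ + s₂), s₁ / (s₁ + s₂), by positivity, by positivity, by field_simp; ring, ?_⟩
  match_scalars <;> field_simp <;> ring

lemma exists_pos_add_sub_notMem_Ioo {α β : ℝ} (hα : α ∈ Set.Ioo 0 1) (hβ : β ∈ Set.Ioo 0 1) :
    ∃ s > 0, α + s ∈ Set.Icc 0 1 ∧ β - s ∈ Set.Icc 0 1 ∧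
      (α + s ∉ Set.Ioo 0 1 ∨ β - s ∉ Set.Ioo 0 1) := by
  obtain ⟨hα0, hα1⟩ := hα
  obtain ⟨hβ0, hβ1⟩ := hβ
  refine ⟨min (1 - α) β, lt_min (by linarith) hβ0, ?_⟩
  rcases le_total (1 - α) β with h | h
  · rw [min_eq_left h]
    exact ⟨⟨by linarith, by linarith⟩, ⟨by linarith, by linarith⟩,
      .inl fun h' => by linarith [h'.2]⟩
  · rw [min_eq_right h]
    exact ⟨⟨by linarith, by linarith⟩, ⟨by linarith, by linarith⟩,
      .inr fun h' => by linarith [h'.1]⟩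

variable {ι : Type*}

lemma add_smul_single_sub_single_apply [DecidableEq ι] {u : ι → ℝ} {i j : ι} {s : ℝ}
    (hij : i ≠ j) (l : ι) :
    (u + s • (Pi.single i 1 - Pi.single j 1 : ι → ℝ)) l =
      if l = i then u i + s else if l = j then u j - s else u l := by
  rcases eq_or_ne l i with rfl | hli
  · simp [hij]
  rcases eq_or_ne l j with rfl | hlj
  · simp [hli, sub_eq_add_neg]
  · simp [hli, hlj]

lemma add_smul_single_sub_single_mem_Icc [DecidableEq ι] {u : ι → ℝ} {i j : ι} {s : ℝ}
    (hu : ∀ l, u l ∈ Set.Icc 0 1) (hij : i ≠ j)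
    (hsi : u i + s ∈ Set.Icc 0 1) (hsj : u j - s ∈ Set.Icc 0 1) (l : ι) :
    (u + s • (Pi.single i 1 - Pi.single j 1 : ι → ℝ)) l ∈ Set.Icc 0 1 := by
  rw [add_smul_single_sub_single_apply hij]
  split_ifs
  exacts [hsi, hsj, hu l]

variable [Fintype ι]

lemma sum_add_smul_single_sub_single [DecidableEq ι] (u : ι → ℝ) (i j : ι) (s : ℝ) :
    ∑ l, (u + s • (Pi.single i 1 - Pi.single j 1 : ι → ℝ)) l = ∑ l, u l := by
  simp [sum_add_distrib, sum_sub_distrib, ← mul_sum]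

noncomputable def fractionalCoords (u : ι → ℝ) : Finset ι := {i | u i ∈ Set.Ioo 0 1}

lemma card_fractionalCoords_add_smul_single_sub_single_lt [DecidableEq ι] {u : ι → ℝ}
    {i j : ι} {s : ℝ} (hij : i ≠ j) (hi : i ∈ fractionalCoords u) (hj : j ∈ fractionalCoords u)
    (hs : u i + s ∉ Set.Ioo 0 1 ∨ u j - s ∉ Set.Ioo 0 1) :
    #(fractionalCoords (u + s • (Pi.single i 1 - Pi.single j 1 : ι → ℝ))) <
      #(fractionalCoords u) := by
  refine card_lt_card ((ssubset_iff_of_subset fun l hl => ?_).2 ?_)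
  · simp only [fractionalCoords, mem_filter, mem_univ, true_and,
      add_smul_single_sub_single_apply hij] at hl ⊢
    split_ifs at hl with hli hlj
    exacts [hli ▸ (mem_filter.1 hi).2, hlj ▸ (mem_filter.1 hj).2, hl]
  · rcases hs with hs | hs
    · exact ⟨i, hi, by
        simpa [fractionalCoords, add_smul_single_sub_single_apply hij] using hs⟩
    · exact ⟨j, hj, by
        simpa [fractionalCoords, add_smul_single_sub_single_apply hij, hij.symm] using hs⟩

theorem card_ne_zero_le_of_card_fractionalCoords_le_one {u : ι → ℝ} {t : ℕ}
    (hu : ∀ i, u i ∈ Set.Icc 0 1) (hsum : ∑ i, u i ≤ t) (hF : #(fractionalCoords u) ≤ 1) :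
    #{i | u i ≠ 0} ≤ t := by
  have hcount : (#{i | u i ≠ 0} : ℝ) = ∑ i, u i + ∑ i ∈ fractionalCoords u, (1 - u i) := by
    rw [fractionalCoords, sum_filter, ← sum_add_distrib, ← sum_boole]
    refine sum_congr rfl fun i _ => ?_
    obtain ⟨h0, h1⟩ := hu i
    rcases h0.eq_or_lt with h0 | h0
    · simp [← h0]
    rcases h1.eq_or_lt with h1 | h1
    · simp [h1]
    · simp [h0.ne', h0, h1]
  have hfrac : ∑ i ∈ fractionalCoords u, (1 - u i) < 1 := by
    rcases Nat.le_one_iff_eq_zero_or_eq_one.1 hF with h | h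
    · simp [card_eq_zero.1 h]
    · obtain ⟨j, hj⟩ := card_eq_one.1 h
      have hj' : j ∈ fractionalCoords u := hj ▸ mem_singleton_self j
      simpa [hj] using (mem_filter.1 hj').2.1
  have : (#{i | u i ≠ 0} : ℝ) < t + 1 := by linarith
  exact Nat.lt_succ_iff.1 (by exact_mod_cast this)

theorem mem_convexHull_l0Ball_of_sum_le [DecidableEq ι] {u : ι → ℝ} {t : ℕ}
    (hu : ∀ i, u i ∈ Set.Icc 0 1) (hsum : ∑ i, u i ≤ t) :
    u ∈ convexHull ℝ (l0Ball 0 1 0 t) := by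
  induction hn : #(fractionalCoords u) using Nat.strong_induction_on generalizing u with
  | _ n ih =>
  by_cases hF : #(fractionalCoords u) ≤ 1
  · exact subset_convexHull ℝ _ ⟨hu, card_ne_zero_le_of_card_fractionalCoords_le_one hu hsum hF⟩
  obtain ⟨i, hi, j, hj, hij⟩ := one_lt_card.1 (not_le.1 hF)
  have hi' := (mem_filter.1 hi).2
  have hj' := (mem_filter.1 hj).2
  have hshift : ∀ s, u i + s ∈ Set.Icc 0 1 → u j - s ∈ Set.Icc 0 1 →
      (u i + s ∉ Set.Ioo 0 1 ∨ u j - s ∉ Set.Ioo 0 1) →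
      u + s • (Pi.single i 1 - Pi.single j 1 : ι → ℝ) ∈ convexHull ℝ (l0Ball 0 1 0 t) :=
    fun s hsi hsj hs =>
      ih _ (hn ▸ card_fractionalCoords_add_smul_single_sub_single_lt hij hi hj hs)
        (add_smul_single_sub_single_mem_Icc hu hij hsi hsj)
        ((sum_add_smul_single_sub_single u i j s).trans_le hsum) rfl
  obtain ⟨s₁, hs₁, hi₁, hj₁, hb₁⟩ := exists_pos_add_sub_notMem_Ioo hi' hj'
  obtain ⟨s₂, hs₂, hj₂, hi₂, hb₂⟩ := exists_pos_add_sub_notMem_Ioo hj' hi'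
  have h₂ := hshift (-s₂) (by simpa [← sub_eq_add_neg] using hi₂) (by simpa using hj₂)
    (by simpa [← sub_eq_add_neg, or_comm] using hb₂)
  rw [neg_smul, ← sub_eq_add_neg] at h₂
  exact (convex_convexHull ℝ _).segment_subset (hshift s₁ hi₁ hj₁ hb₁) h₂
    (mem_segment_add_smul_sub_smul u _ hs₁ hs₂)

end CappedSimplex

section IntervalGauge

/-- `δ` restricted to the box `[a, b]`. Where `b = x` (or `a = x`) the junk value `_ / 0 = 0`
is harmless, since then no `c ∈ [a, b]` lies strictly above (below) `x`. -/
noncomputable def intervalGauge (a b x c : ℝ) : ℝ :=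
  max (c - x) 0 / (b - x) + max (x - c) 0 / (x - a)

variable {a b x c : ℝ}

lemma convexOn_intervalGauge (hax : a ≤ x) (hxb : x ≤ b) :
    ConvexOn ℝ Set.univ (intervalGauge a b x) := by
  have hup : ConvexOn ℝ Set.univ fun c : ℝ => max (c - x) 0 :=
    ((convexOn_id convex_univ).sub (concaveOn_const x convex_univ)).sup
      (convexOn_const 0 convex_univ)
  have hdown : ConvexOn ℝ Set.univ fun c : ℝ => max (x - c) 0 :=
    ((concaveOn_id convex_univ).neg.add (convexOn_const x convex_univ)).sup
      (convexOn_const 0 convex_univ) |>.congr fun c _ => by simp [neg_add_eq_sub]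
  refine ((hup.smul (inv_nonneg.2 (sub_nonneg.2 hxb))).add
    (hdown.smul (inv_nonneg.2 (sub_nonneg.2 hax)))).congr fun c _ => ?_
  simp [intervalGauge, div_eq_inv_mul]

lemma intervalGauge_nonneg (hax : a ≤ x) (hxb : x ≤ b) (c : ℝ) : 0 ≤ intervalGauge a b x c := by
  have := sub_nonneg.2 hax
  have := sub_nonneg.2 hxb
  unfold intervalGauge
  positivity

@[simp] lemma intervalGauge_self : intervalGauge a b x x = 0 := by simp [intervalGauge]

lemma intervalGauge_le_one (hc : c ∈ Set.Icc a b) : intervalGauge a b x c ≤ 1 := by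
  rcases le_total x c with h | h
  · simpa [intervalGauge, h] using div_le_one_of_le₀ (by linarith [hc.2]) (by linarith [hc.2])
  · simpa [intervalGauge, h] using div_le_one_of_le₀ (by linarith [hc.1]) (by linarith [hc.1])

lemma lineMap_intervalGauge (hc : c ∈ Set.Icc a b) :
    AffineMap.lineMap x (if x ≤ c then b else a) (intervalGauge a b x c) = c := by
  rw [AffineMap.lineMap_apply_ring']
  split_ifs with h
  · rcases (h.trans hc.2).eq_or_lt with hxb | hxb
    · simp [← hxb, le_antisymm (hxb ▸ hc.2) h]
    · rw [intervalGauge, max_eq_left (sub_nonneg.2 h), max_eq_right (sub_nonpos.2 h)]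
      field_simp
      ring
  · replace h := not_le.1 h
    rw [intervalGauge, max_eq_right (sub_nonpos.2 h.le), max_eq_left (sub_nonneg.2 h.le)]
    field_simp [(sub_pos.2 (hc.1.trans_lt h)).ne']
    ring

end IntervalGauge

variable {ι : Type*} [Fintype ι]

lemma convexOn_sum_apply {f : ι → ℝ → ℝ} (hf : ∀ i, ConvexOn ℝ Set.univ (f i)) :
    ConvexOn ℝ Set.univ fun y : ι → ℝ => ∑ i, f i (y i) := by
  refine ⟨convex_univ, fun y _ z _ θ σ hθ hσ hθσ => ?_⟩
  simp only [Pi.add_apply, Pi.smul_apply, smul_eq_mul, mul_sum, ← sum_add_distrib]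
  exact sum_le_sum fun i _ => (hf i).2 trivial trivial hθ hσ hθσ

lemma convex_setOf_sum_intervalGauge_le {a b x : ι → ℝ} (hx : ∀ i, x i ∈ Set.Icc (a i) (b i))
    (r : ℝ) :
    Convex ℝ {y : ι → ℝ | (∀ i, y i ∈ Set.Icc (a i) (b i)) ∧
      ∑ i, intervalGauge (a i) (b i) (x i) (y i) ≤ r} :=
  have hbox : Convex ℝ {y : ι → ℝ | ∀ i, y i ∈ Set.Icc (a i) (b i)} :=
    fun _ hy _ hz _ _ hθ hσ hθσ i => convex_Icc _ _ (hy i) (hz i) hθ hσ hθσ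
  ((convexOn_sum_apply fun i => convexOn_intervalGauge (hx i).1 (hx i).2).subset
    (Set.subset_univ _) hbox).convex_le r

lemma sum_intervalGauge_le_card {a b x y : ι → ℝ} {t : ℕ} (hy : y ∈ l0Ball a b x t) :
    ∑ i, intervalGauge (a i) (b i) (x i) (y i) ≤ #{i | y i ≠ x i} := by
  rw [← sum_boole]
  refine sum_le_sum fun i _ => ?_
  split_ifs with h
  · exact intervalGauge_le_one (hy.1 i)
  · simp [not_not.1 h]

lemma lineMap_mem_l0Ball {a b x e v : ι → ℝ} {t : ℕ} (hx : ∀ i, x i ∈ Set.Icc (a i) (b i))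
    (he : ∀ i, e i ∈ Set.Icc (a i) (b i)) (hv : v ∈ l0Ball 0 1 0 t) :
    (fun i => AffineMap.lineMap (x i) (e i) (v i)) ∈ l0Ball a b x t := by
  refine ⟨fun i => (convex_Icc _ _).lineMap_mem (hx i) (he i) (hv.1 i), ?_⟩
  refine (card_le_card fun i => ?_).trans hv.2
  simp only [mem_filter, mem_univ, true_and, Pi.zero_apply]
  exact mt fun h => by simp [h]

theorem mem_convexHull_l0Ball_of_sum_intervalGauge_le [DecidableEq ι] {a b x y : ι → ℝ} {t : ℕ}
    (hx : ∀ i, x i ∈ Set.Icc (a i) (b i)) (hy : ∀ i, y i ∈ Set.Icc (a i) (b i))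
    (hsum : ∑ i, intervalGauge (a i) (b i) (x i) (y i) ≤ t) :
    y ∈ convexHull ℝ (l0Ball a b x t) := by
  let e i := if x i ≤ y i then b i else a i
  have he : ∀ i, e i ∈ Set.Icc (a i) (b i) := fun i => by
    dsimp only [e]; split_ifs <;> simp [(hx i).1.trans (hx i).2]
  let L : (ι → ℝ) →ᵃ[ℝ] (ι → ℝ) :=
    AffineMap.pi fun i => (AffineMap.lineMap (x i) (e i)).comp (AffineMap.proj i)
  have hu := mem_convexHull_l0Ball_of_sum_le
    (fun i => ⟨intervalGauge_nonneg (hx i).1 (hx i).2 _, intervalGauge_le_one (hy i)⟩) hsum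
  have hLu : L (fun i => intervalGauge (a i) (b i) (x i) (y i)) = y :=
    funext fun i => lineMap_intervalGauge (hy i)
  have hL : L '' l0Ball 0 1 0 t ⊆ l0Ball a b x t :=
    Set.image_subset_iff.2 fun _ hv => lineMap_mem_l0Ball hx he hv
  rw [← hLu]
  exact convexHull_mono hL (L.image_convexHull _ ▸ Set.mem_image_of_mem L hu)

theorem convexHull_l0Ball_eq [DecidableEq ι] {a b x : ι → ℝ}
    (hx : ∀ i, x i ∈ Set.Icc (a i) (b i)) (t : ℕ) :
    convexHull ℝ (l0Ball a b x t) = {y | (∀ i, y i ∈ Set.Icc (a i) (b i)) ∧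
      ∑ i, intervalGauge (a i) (b i) (x i) (y i) ≤ t} :=
  Set.Subset.antisymm
    (convexHull_min (fun _ hy => ⟨hy.1, (sum_intervalGauge_le_card hy).trans (mod_cast hy.2)⟩)
      (convex_setOf_sum_intervalGauge_le hx _))
    fun _ hy => mem_convexHull_l0Ball_of_sum_intervalGauge_le hx hy.1 hy.2

lemma deltaE_eq_ofReal_intervalGauge {k : ℕ} {a b x y : Fin k → ℝ} {i : Fin k}
    (hy : y i ∈ Set.Icc (a i) (b i)) :
    deltaE a b x i y = ENNReal.ofReal (intervalGauge (a i) (b i) (x i) (y i)) := by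
  rcases lt_trichotomy (y i) (x i) with h | h | h
  · rw [deltaE, if_neg h.ne, if_neg h.not_gt, if_neg (hy.1.trans_lt h).ne, intervalGauge,
      max_eq_right (sub_nonpos.2 h.le), max_eq_left (sub_nonneg.2 h.le), zero_div, zero_add,
      ← neg_sub (y i), ← neg_sub (a i), neg_div_neg_eq]
  · simp [deltaE, h]
  · rw [deltaE, if_neg h.ne', if_pos h, if_neg (h.trans_le hy.2).ne', intervalGauge,
      max_eq_left (sub_nonneg.2 h.le), max_eq_right (sub_nonpos.2 h.le), zero_div, add_zero]

lemma sum_deltaE_le_iff {k : ℕ} {a b x y : Fin k → ℝ} (hx : ∀ i, x i ∈ Set.Icc (a i) (b i))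
    (hy : ∀ i, y i ∈ Set.Icc (a i) (b i)) (t : ℕ) :
    ∑ i, deltaE a b x i y ≤ t ↔ ∑ i, intervalGauge (a i) (b i) (x i) (y i) ≤ t := by
  simp only [deltaE_eq_ofReal_intervalGauge (hy _)]
  rw [← ENNReal.ofReal_sum_of_nonneg fun i _ => intervalGauge_nonneg (hx i).1 (hx i).2 _,
    ← ENNReal.ofReal_natCast, ENNReal.ofReal_le_ofReal_iff t.cast_nonneg]

theorem convexHull_l0Ball_general {k : ℕ} (t : ℕ)
    (a b x : Fin k → ℝ) (hx : ∀ i, a i ≤ x i ∧ x i ≤ b i) :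
    convexHull ℝ
        {y : Fin k → ℝ | (∀ i, y i ∈ Set.Icc (a i) (b i)) ∧
          (Finset.univ.filter (fun i => y i ≠ x i)).card ≤ t} =
      {y : Fin k → ℝ | ∀ i, y i ∈ Set.Icc (a i) (b i)} ∩
        {y : Fin k → ℝ | ∑ i, deltaE a b x i y ≤ (t : ℝ≥0∞)} := by
  have hball : {y : Fin k → ℝ | ∀ i, y i ∈ Set.Icc (a i) (b i)} ∩
      {y : Fin k → ℝ | ∑ i, deltaE a b x i y ≤ (t : ℝ≥0∞)} =
      {y | (∀ i, y i ∈ Set.Icc (a i) (b i)) ∧ ∑ i, intervalGauge (a i) (b i) (x i) (y i) ≤ t} :=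
    Set.ext fun _ => and_congr_right fun hy => sum_deltaE_le_iff hx hy t
  rw [hball, ← convexHull_l0Ball_eq hx]
  rfl

/-- The convex hull of the ℓ₀-ball equals the intersection of the box with the
asymmetrically scaled ℓ₁-ball. -/
theorem convexHull_l0Ball {k : ℕ} (hk : 1 ≤ k) (t : ℕ) (ht : 1 ≤ t) (htk : t ≤ k)
    (a b x : Fin k → ℝ) (hab : ∀ i, a i ≤ b i) (hx : ∀ i, a i ≤ x i ∧ x i ≤ b i) :
    convexHull ℝ
        {y : Fin k → ℝ | (∀ i, y i ∈ Set.Icc (a i) (b i)) ∧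
          (Finset.univ.filter (fun i => y i ≠ x i)).card ≤ t} =
      {y : Fin k → ℝ | ∀ i, y i ∈ Set.Icc (a i) (b i)} ∩
        {y : Fin k → ℝ | ∑ i, deltaE a b x i y ≤ (t : ℝ≥0∞)} :=
  convexHull_l0Ball_general t a b x hx
end

section
/- Every extreme point of the convex set $\mathcal{D} \cap \widetilde{\mathcal{B}}_1^t(\bar{x})$ lies in the set $\{z \in \prod_{i=1}^k \{a_i, \bar{x}_i, b_i\} \mid |\{i \in [k] \mid z_i \neq \bar{x}_i\}| \leq t\}$; in particular, every extreme point lies in the $\ell_0$-ball $\mathcal{B}_0^t(\bar{x})$. -/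
/-!
On the box, `deltaE` is the real function `scaledDist`, which is affine on each side of `xᵢ` with
slope the reciprocal of that side's length. If an extreme point `z` had a coordinate with
fractional scaled distance, moving that coordinate along its side (against a second fractional
coordinate when the budget `t` is exhausted; one exists because `t` is an integer) in both
directions would exhibit `z` as a midpoint of two points of the set. So every scaled distance is
`0` or `1`: each `zᵢ` is one of `aᵢ, xᵢ, bᵢ`, and the budget counts the coordinates where `z`
differs from `x`.
-/

open scoped ENNReal

open Set

/-- The real-valued `deltaE`: the two agree on `[a, b]`, where the `⊤` branches cannot occur. -/
noncomputable def scaledDist (a b x v : ℝ) : ℝ :=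
  if v = x then 0 else if x < v then (v - x) / (b - x) else (v - x) / (a - x)

noncomputable def sideLength (a b x v : ℝ) : ℝ :=
  if x < v then b - x else a - x

section OneCoordinate

variable {a b x v : ℝ}

lemma scaledDist_nonneg (hv : v ∈ Icc a b) : 0 ≤ scaledDist a b x v := by
  unfold scaledDist
  split_ifs
  · rfl
  · exact div_nonneg (by linarith) (by linarith [hv.2])
  · exact div_nonneg_of_nonpos (by linarith) (by linarith [hv.1])

lemma scaledDist_le_one (hv : v ∈ Icc a b) : scaledDist a b x v ≤ 1 := by
  unfold scaledDist
  split_ifs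
  · exact zero_le_one
  · exact div_le_one_of_le₀ (by linarith [hv.2]) (by linarith [hv.2])
  · rw [← neg_div_neg_eq]
    exact div_le_one_of_le₀ (by linarith [hv.1]) (by linarith [hv.1])

lemma scaledDist_eq_zero_iff (hv : v ∈ Icc a b) : scaledDist a b x v = 0 ↔ v = x := by
  refine ⟨fun h => ?_, fun h => by simp [scaledDist, h]⟩
  by_contra hvx
  unfold scaledDist at h
  split_ifs at h with hxv
  · rcases div_eq_zero_iff.mp h with h | h <;> linarith [hv.2]
  · rcases div_eq_zero_iff.mp h with h | h
    · exact hvx (by linarith)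
    · exact hxv (by linarith [hv.1, lt_of_le_of_ne (not_lt.mp hxv) hvx])

lemma eq_or_eq_of_scaledDist_eq_one (h : scaledDist a b x v = 1) : v = a ∨ v = b := by
  unfold scaledDist at h
  split_ifs at h
  · exact absurd h zero_ne_one
  · have hb : b - x ≠ 0 := fun h0 => by simp [h0] at h
    exact Or.inr (by linarith [(div_eq_one_iff_eq hb).mp h])
  · have ha : a - x ≠ 0 := fun h0 => by simp [h0] at h
    exact Or.inl (by linarith [(div_eq_one_iff_eq ha).mp h])

lemma add_scaledDist_mul_sideLength (hv : v ∈ Icc a b) :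
    x + scaledDist a b x v * sideLength a b x v = v := by
  by_cases hvx : v = x
  · simp [scaledDist, hvx]
  by_cases hxv : x < v
  · simp only [scaledDist, sideLength, if_neg hvx, if_pos hxv]
    rw [div_mul_cancel₀ _ (by linarith [hv.2])]; ring
  · simp only [scaledDist, sideLength, if_neg hvx, if_neg hxv]
    rw [div_mul_cancel₀ _ (by linarith [hv.1, lt_of_le_of_ne (not_lt.mp hxv) hvx])]; ring

lemma scaledDist_add_mul_sideLength {η : ℝ} (hx : x ∈ Icc a b) (hv : v ∈ Icc a b) (hvx : v ≠ x)
    (h0 : 0 ≤ scaledDist a b x v + η) (h1 : scaledDist a b x v + η ≤ 1) :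
    v + η * sideLength a b x v ∈ Icc a b ∧
      scaledDist a b x (v + η * sideLength a b x v) = scaledDist a b x v + η := by
  set s := scaledDist a b x v + η
  have hw : v + η * sideLength a b x v = x + s * sideLength a b x v := by
    nth_rw 1 [← add_scaledDist_mul_sideLength (x := x) hv]; ring
  rw [hw]
  unfold sideLength
  split_ifs with hxv
  · have hxb : 0 < b - x := by linarith [hv.2]
    refine ⟨⟨by nlinarith [hx.1], by nlinarith⟩, ?_⟩
    rcases h0.eq_or_lt with hs | hs
    · simp [scaledDist, ← hs]
    · have hlt : x < x + s * (b - x) := by nlinarith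
      simp only [scaledDist, if_neg hlt.ne', if_pos hlt]
      field_simp; ring
  · have hax : a - x < 0 := by linarith [hv.1, lt_of_le_of_ne (not_lt.mp hxv) hvx]
    refine ⟨⟨by nlinarith, by nlinarith [hx.2]⟩, ?_⟩
    rcases h0.eq_or_lt with hs | hs
    · simp [scaledDist, ← hs]
    · have hlt : x + s * (a - x) < x := by nlinarith
      simp only [scaledDist, if_neg hlt.ne, if_neg (not_lt.mpr hlt.le)]
      field_simp [hax.ne]; ring

end OneCoordinate

lemma eq_zero_of_add_mem_of_sub_mem_of_mem_extremePoints {E : Type*} [AddCommGroup E]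
    [Module ℝ E] {A : Set E} {z v : E} (hz : z ∈ A.extremePoints ℝ) (hadd : z + v ∈ A)
    (hsub : z - v ∈ A) : v = 0 := by
  have hseg : z ∈ openSegment ℝ (z + v) (z - v) :=
    ⟨1 / 2, 1 / 2, by norm_num, by norm_num, by norm_num, by module⟩
  simpa using (mem_extremePoints_iff_left.mp hz).2 _ hadd _ hsub hseg

lemma exists_ne_mem_Ioo_of_sum_eq_natCast {ι : Type*} [Fintype ι] [DecidableEq ι] {f : ι → ℝ}
    (hf : ∀ i, f i ∈ Icc 0 1) {j : ι} (hj : f j ∈ Ioo 0 1) {n : ℕ} (hn : ∑ i, f i = n) :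
    ∃ i ≠ j, f i ∈ Ioo 0 1 := by
  by_contra! hint
  have hbool : ∀ i ∈ Finset.univ.erase j, f i = if f i = 1 then 1 else 0 := by
    intro i hi
    have h01 := hint i (Finset.ne_of_mem_erase hi)
    split_ifs with h1
    · exact h1
    · by_contra h0
      exact h01 ⟨lt_of_le_of_ne (hf i).1 (Ne.symm h0), lt_of_le_of_ne (hf i).2 h1⟩
  rw [← Finset.add_sum_erase _ _ (Finset.mem_univ j), Finset.sum_congr rfl hbool,
    Finset.sum_boole] at hn
  set m := {i ∈ Finset.univ.erase j | f i = 1}.card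
  have hlt : (m : ℝ) < n := by linarith [hj.1]
  have hgt : (n : ℝ) < m + 1 := by linarith [hj.2]
  norm_cast at hlt hgt
  omega

section Box

variable {ι : Type*} [Fintype ι] {a b x z : ι → ℝ} {t : ℝ}

def scaledBall (a b x : ι → ℝ) (t : ℝ) : Set (ι → ℝ) :=
  {y | (∀ i, y i ∈ Icc (a i) (b i)) ∧ ∑ i, scaledDist (a i) (b i) (x i) (y i) ≤ t}

lemma add_mul_sideLength_mem_scaledBall (hx : ∀ i, x i ∈ Icc (a i) (b i))
    (hz : z ∈ scaledBall a b x t) {η : ι → ℝ}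
    (hη : ∀ i, |η i| ≤ min (scaledDist (a i) (b i) (x i) (z i))
      (1 - scaledDist (a i) (b i) (x i) (z i)))
    (hsum : ∑ i, scaledDist (a i) (b i) (x i) (z i) + ∑ i, η i ≤ t) :
    (fun i => z i + η i * sideLength (a i) (b i) (x i) (z i)) ∈ scaledBall a b x t ∧
      ∀ i, scaledDist (a i) (b i) (x i) (z i + η i * sideLength (a i) (b i) (x i) (z i)) =
        scaledDist (a i) (b i) (x i) (z i) + η i := by
  have hcoord : ∀ i, z i + η i * sideLength (a i) (b i) (x i) (z i) ∈ Icc (a i) (b i) ∧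
      scaledDist (a i) (b i) (x i) (z i + η i * sideLength (a i) (b i) (x i) (z i)) =
        scaledDist (a i) (b i) (x i) (z i) + η i := by
    intro i
    obtain ⟨hη0, hη1⟩ := le_min_iff.mp (hη i)
    rcases eq_or_ne (z i) (x i) with hzx | hzx
    · have hd : scaledDist (a i) (b i) (x i) (z i) = 0 := (scaledDist_eq_zero_iff (hz.1 i)).mpr hzx
      have : η i = 0 := abs_nonpos_iff.mp (hd ▸ hη0)
      simp [this, hz.1 i]
    · exact scaledDist_add_mul_sideLength (hx i) (hz.1 i) hzx
        (by linarith [neg_abs_le (η i)]) (by linarith [le_abs_self (η i)])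
  refine ⟨⟨fun i => (hcoord i).1, ?_⟩, fun i => (hcoord i).2⟩
  simpa only [(hcoord _).2, Finset.sum_add_distrib] using hsum

lemma eq_zero_of_mem_extremePoints_scaledBall (hx : ∀ i, x i ∈ Icc (a i) (b i))
    (hz : z ∈ (scaledBall a b x t).extremePoints ℝ) {η : ι → ℝ}
    (hη : ∀ i, |η i| ≤ min (scaledDist (a i) (b i) (x i) (z i))
      (1 - scaledDist (a i) (b i) (x i) (z i)))
    (hsum : |∑ i, η i| ≤ t - ∑ i, scaledDist (a i) (b i) (x i) (z i)) : η = 0 := by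
  obtain ⟨hadd, hdist⟩ := add_mul_sideLength_mem_scaledBall hx hz.1 hη
    (by linarith [le_abs_self (∑ i, η i)])
  obtain ⟨hsub, -⟩ := add_mul_sideLength_mem_scaledBall hx hz.1 (η := -η)
    (by simpa only [Pi.neg_apply, abs_neg] using hη)
    (by simp only [Pi.neg_apply, Finset.sum_neg_distrib]; linarith [neg_abs_le (∑ i, η i)])
  have hmove := eq_zero_of_add_mem_of_sub_mem_of_mem_extremePoints hz
    (v := fun i => η i * sideLength (a i) (b i) (x i) (z i))
    (by simpa only [Pi.add_def] using hadd)
    (by simpa only [Pi.sub_def, Pi.neg_apply, neg_mul, ← sub_eq_add_neg] using hsub)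
  funext i
  simpa [congrFun hmove i] using hdist i

lemma sum_scaledDist_eq_of_mem_extremePoints [DecidableEq ι]
    (hx : ∀ i, x i ∈ Icc (a i) (b i)) (hz : z ∈ (scaledBall a b x t).extremePoints ℝ) {j : ι}
    (hj : scaledDist (a j) (b j) (x j) (z j) ∈ Ioo 0 1) :
    ∑ i, scaledDist (a i) (b i) (x i) (z i) = t := by
  set d := fun i => scaledDist (a i) (b i) (x i) (z i)
  refine hz.1.2.eq_of_not_lt fun hslack => ?_
  set ε := min (min (d j) (1 - d j)) (t - ∑ i, d i)
  have hε : 0 < ε := lt_min (lt_min hj.1 (sub_pos.mpr hj.2)) (sub_pos.mpr hslack)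
  have hη : (Pi.single j ε : ι → ℝ) = 0 := by
    refine eq_zero_of_mem_extremePoints_scaledBall hx hz (fun i => ?_) ?_
    · rcases eq_or_ne i j with rfl | hij
      · rw [Pi.single_eq_same, abs_of_pos hε]
        exact min_le_left _ _
      · rw [Pi.single_eq_of_ne hij, abs_zero]
        exact le_min (scaledDist_nonneg (hz.1.1 i)) (sub_nonneg.mpr (scaledDist_le_one (hz.1.1 i)))
    · rw [Finset.sum_pi_single', if_pos (Finset.mem_univ j), abs_of_pos hε]
      exact min_le_right _ _
  exact hε.ne' (by simpa using congrFun hη j)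

lemma eq_of_mem_extremePoints_of_scaledDist_mem_Ioo [DecidableEq ι]
    (hx : ∀ i, x i ∈ Icc (a i) (b i)) (hz : z ∈ (scaledBall a b x t).extremePoints ℝ) {j j' : ι}
    (hj : scaledDist (a j) (b j) (x j) (z j) ∈ Ioo 0 1)
    (hj' : scaledDist (a j') (b j') (x j') (z j') ∈ Ioo 0 1) : j = j' := by
  set d := fun i => scaledDist (a i) (b i) (x i) (z i)
  by_contra hjj'
  set ε := min (min (d j) (1 - d j)) (min (d j') (1 - d j'))
  have hε : 0 < ε :=
    lt_min (lt_min hj.1 (sub_pos.mpr hj.2)) (lt_min hj'.1 (sub_pos.mpr hj'.2))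
  have hη : (Pi.single j ε - Pi.single j' ε : ι → ℝ) = 0 := by
    refine eq_zero_of_mem_extremePoints_scaledBall hx hz (fun i => ?_) (by simpa using hz.1.2)
    rcases eq_or_ne i j with rfl | hij
    · rw [Pi.sub_apply, Pi.single_eq_same, Pi.single_eq_of_ne hjj', sub_zero, abs_of_pos hε]
      exact min_le_left _ _
    rcases eq_or_ne i j' with rfl | hij'
    · rw [Pi.sub_apply, Pi.single_eq_same, Pi.single_eq_of_ne hij, zero_sub, abs_neg,
        abs_of_pos hε]
      exact min_le_right _ _
    · rw [Pi.sub_apply, Pi.single_eq_of_ne hij, Pi.single_eq_of_ne hij', sub_zero, abs_zero]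
      exact le_min (scaledDist_nonneg (hz.1.1 i)) (sub_nonneg.mpr (scaledDist_le_one (hz.1.1 i)))
  exact hε.ne' (by simpa [hjj'] using congrFun hη j)

/-- The budget `t` must be an integer: a single fractional coordinate cannot exhaust it. -/
lemma scaledDist_eq_zero_or_eq_one_of_mem_extremePoints [DecidableEq ι]
    (hx : ∀ i, x i ∈ Icc (a i) (b i)) {t : ℕ} (hz : z ∈ (scaledBall a b x t).extremePoints ℝ)
    (j : ι) :
    scaledDist (a j) (b j) (x j) (z j) = 0 ∨ scaledDist (a j) (b j) (x j) (z j) = 1 := by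
  have hd : ∀ i, scaledDist (a i) (b i) (x i) (z i) ∈ Icc 0 1 := fun i =>
    ⟨scaledDist_nonneg (hz.1.1 i), scaledDist_le_one (hz.1.1 i)⟩
  by_contra! hfrac
  have hj : scaledDist (a j) (b j) (x j) (z j) ∈ Ioo 0 1 :=
    ⟨lt_of_le_of_ne (hd j).1 (Ne.symm hfrac.1), lt_of_le_of_ne (hd j).2 hfrac.2⟩
  obtain ⟨j', hj'j, hj'⟩ := exists_ne_mem_Ioo_of_sum_eq_natCast hd hj
    (sum_scaledDist_eq_of_mem_extremePoints hx hz hj)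
  exact hj'j (eq_of_mem_extremePoints_of_scaledDist_mem_Ioo hx hz hj' hj)

lemma sum_scaledDist_eq_card (hz : ∀ i, z i ∈ Icc (a i) (b i))
    (hd : ∀ i, scaledDist (a i) (b i) (x i) (z i) = 0 ∨ scaledDist (a i) (b i) (x i) (z i) = 1) :
    ∑ i, scaledDist (a i) (b i) (x i) (z i) = (Finset.univ.filter fun i => z i ≠ x i).card := by
  rw [← Finset.sum_boole]
  refine Finset.sum_congr rfl fun i _ => ?_
  rcases hd i with h | h
  · rw [h, if_neg (not_not.mpr ((scaledDist_eq_zero_iff (hz i)).mp h))]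
  · rw [h, if_pos fun hzx => by simp [scaledDist, hzx] at h]

end Box

section FinBox

variable {k : ℕ} {a b x : Fin k → ℝ}

lemma deltaE_eq_ofReal_scaledDist {y : Fin k → ℝ} {i : Fin k} (hy : y i ∈ Icc (a i) (b i)) :
    deltaE a b x i y = ENNReal.ofReal (scaledDist (a i) (b i) (x i) (y i)) := by
  unfold deltaE scaledDist
  split_ifs with hyx hxy
  · simp
  · linarith [hy.2]
  · rfl
  · linarith [hy.1, lt_of_le_of_ne (not_lt.mp hxy) hyx]
  · rfl

lemma box_inter_sum_deltaE_le_eq_scaledBall (t : ℕ) :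
    {y : Fin k → ℝ | ∀ i, y i ∈ Icc (a i) (b i)} ∩ {y | ∑ i, deltaE a b x i y ≤ (t : ℝ≥0∞)} =
      scaledBall a b x t := by
  ext y
  refine and_congr_right fun hy => ?_
  change ∑ i, deltaE a b x i y ≤ (t : ℝ≥0∞) ↔ _
  rw [Finset.sum_congr rfl fun i _ => deltaE_eq_ofReal_scaledDist (hy i),
    ← ENNReal.ofReal_sum_of_nonneg fun i _ => scaledDist_nonneg (hy i), ← ENNReal.ofReal_natCast,
    ENNReal.ofReal_le_ofReal_iff (Nat.cast_nonneg t)]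

end FinBox

theorem extremePoints_subset_l0Ball_general {k : ℕ} (t : ℕ)
    (a b x : Fin k → ℝ) (hx : ∀ i, a i ≤ x i ∧ x i ≤ b i)
    (z : Fin k → ℝ)
    (hz : z ∈ Set.extremePoints ℝ
      ({y : Fin k → ℝ | ∀ i, y i ∈ Set.Icc (a i) (b i)} ∩
        {y : Fin k → ℝ | ∑ i, deltaE a b x i y ≤ (t : ℝ≥0∞)})) :
    ((∀ i, z i = a i ∨ z i = x i ∨ z i = b i) ∧
        (Finset.univ.filter (fun i => z i ≠ x i)).card ≤ t) ∧
      z ∈ {y : Fin k → ℝ | (∀ i, y i ∈ Set.Icc (a i) (b i)) ∧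
        (Finset.univ.filter (fun i => y i ≠ x i)).card ≤ t} := by
  rw [box_inter_sum_deltaE_le_eq_scaledBall] at hz
  have hbox := hz.1.1
  have hd := scaledDist_eq_zero_or_eq_one_of_mem_extremePoints hx hz
  have hcoord : ∀ i, z i = a i ∨ z i = x i ∨ z i = b i := fun i =>
    (hd i).elim (fun h => Or.inr (Or.inl ((scaledDist_eq_zero_iff (hbox i)).mp h)))
      fun h => (eq_or_eq_of_scaledDist_eq_one h).imp_right Or.inr
  have hcard : (Finset.univ.filter fun i => z i ≠ x i).card ≤ t := by
    have hsum := hz.1.2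
    rw [sum_scaledDist_eq_card hbox hd] at hsum
    exact_mod_cast hsum
  exact ⟨⟨hcoord, hcard⟩, hbox, hcard⟩

/-- Every extreme point of `D ∩ B̃₁ᵗ(x)` has all coordinates in `{aᵢ, xᵢ, bᵢ}`,
differs from `x` in at most `t` coordinates, and in particular lies in the ℓ₀-ball. -/
theorem extremePoints_subset_l0Ball {k : ℕ} (hk : 1 ≤ k) (t : ℕ) (ht : 1 ≤ t) (htk : t ≤ k)
    (a b x : Fin k → ℝ) (hab : ∀ i, a i ≤ b i) (hx : ∀ i, a i ≤ x i ∧ x i ≤ b i)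
    (z : Fin k → ℝ)
    (hz : z ∈ Set.extremePoints ℝ
      ({y : Fin k → ℝ | ∀ i, y i ∈ Set.Icc (a i) (b i)} ∩
        {y : Fin k → ℝ | ∑ i, deltaE a b x i y ≤ (t : ℝ≥0∞)})) :
    ((∀ i, z i = a i ∨ z i = x i ∨ z i = b i) ∧
        (Finset.univ.filter (fun i => z i ≠ x i)).card ≤ t) ∧
      z ∈ {y : Fin k → ℝ | (∀ i, y i ∈ Set.Icc (a i) (b i)) ∧
        (Finset.univ.filter (fun i => y i ≠ x i)).card ≤ t} :=
  extremePoints_subset_l0Ball_general t a b x hx z hz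
end

section
/- For fixed integer $t \geq 1$, the ratio $\frac{k!/t^k - \sum_{r=0}^{t-1} c_{r,k,t}}{1 + \sum_{r=1}^{t-1} c_{r,k,t}}$, where $c_{r,k,t} = (-1)^r \binom{k}{r}(1-r/t)^k$, tends to $+\infty$ as $k \to \infty$; i.e., the relative excess volume of the bounding box $\mathcal{D}$ over the convex hull of the $\ell_0$-ball diverges. -/
/-! The sum over `r < t` is `1` plus the terms with `0 < r < t`, each of which is bounded by
`k ^ r (1 - r/t) ^ k` and so tends to `0`. The ratio is therefore asymptotic to `k! / t ^ k - 1`,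
which diverges since `t ^ k / k! → 0`. -/

open Filter

noncomputable def cCoeff (r k t : ℕ) : ℝ :=
  (-1 : ℝ) ^ r * (Nat.choose k r) * (1 - (r : ℝ) / (t : ℝ)) ^ k

open Topology Finset Nat

lemma tendsto_factorial_div_pow_atTop {x : ℝ} (hx : 0 < x) :
    Tendsto (fun k : ℕ => (k ! : ℝ) / x ^ k) atTop atTop := by
  have hpos : Tendsto (fun k : ℕ => x ^ k / k !) atTop (𝓝[>] 0) :=
    tendsto_nhdsWithin_iff.mpr ⟨FloorSemiring.tendsto_pow_div_factorial_atTop x,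
      Eventually.of_forall fun k => Set.mem_Ioi.mpr (by positivity)⟩
  simpa only [Pi.inv_def, inv_div] using hpos.inv_tendsto_nhdsGT_zero

lemma Filter.Tendsto.sub_div_self_atTop {ι : Type*} {l : Filter ι} {a D : ι → ℝ} {c : ℝ}
    (ha : Tendsto a l atTop) (hD : Tendsto D l (𝓝 c)) (hc : 0 < c) :
    Tendsto (fun i => (a i - D i) / D i) l atTop := by
  have hquot : Tendsto (fun i => a i * (D i)⁻¹ - 1) l atTop :=
    tendsto_atTop_add_const_right _ (-1) (ha.atTop_mul_pos (inv_pos.mpr hc) (hD.inv₀ hc.ne'))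
  refine hquot.congr' ?_
  filter_upwards [hD.eventually_ne hc.ne'] with i hi
  field_simp

lemma cCoeff_zero_left (k t : ℕ) : cCoeff 0 k t = 1 := by
  simp [cCoeff]

lemma sum_range_cCoeff {t : ℕ} (ht : 1 ≤ t) (k : ℕ) :
    ∑ r ∈ range t, cCoeff r k t = 1 + ∑ r ∈ Icc 1 (t - 1), cCoeff r k t := by
  have hrange : range t = insert 0 (Icc 1 (t - 1)) := by
    ext r
    simp only [mem_range, mem_insert, mem_Icc]
    omega
  rw [hrange, sum_insert (by simp), cCoeff_zero_left]

lemma tendsto_cCoeff_zero {r t : ℕ} (hr : 0 < r) (hrt : r < t) :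
    Tendsto (fun k : ℕ => cCoeff r k t) atTop (𝓝 0) := by
  have ht : (0 : ℝ) < t := by exact_mod_cast hr.trans hrt
  have hbase_nonneg : 0 ≤ 1 - (r : ℝ) / t := by
    rw [sub_nonneg, div_le_one ht]
    exact_mod_cast hrt.le
  have hbase_lt_one : 1 - (r : ℝ) / t < 1 := by
    have : (0 : ℝ) < r / t := div_pos (by exact_mod_cast hr) ht
    linarith
  refine squeeze_zero_norm (fun k => ?_)
    (tendsto_pow_const_mul_const_pow_of_lt_one r hbase_nonneg hbase_lt_one)
  simp only [cCoeff, norm_mul, norm_pow, norm_neg, norm_one, one_pow, one_mul,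
    Real.norm_natCast, Real.norm_of_nonneg hbase_nonneg]
  gcongr
  exact_mod_cast Nat.choose_le_pow k r

lemma tendsto_sum_Icc_cCoeff_zero (t : ℕ) :
    Tendsto (fun k : ℕ => ∑ r ∈ Icc 1 (t - 1), cCoeff r k t) atTop (𝓝 0) := by
  have hterms : ∀ r ∈ Icc 1 (t - 1), Tendsto (fun k : ℕ => cCoeff r k t) atTop (𝓝 0) := by
    intro r hr
    rw [mem_Icc] at hr
    exact tendsto_cCoeff_zero hr.1 (by omega)
  simpa using tendsto_finsetSum (Icc 1 (t - 1)) hterms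

/-- The relative excess volume of the bounding box over the convex hull diverges. -/
theorem excess_volume_box_tendsto_atTop (t : ℕ) (ht : 1 ≤ t) :
    Tendsto
      (fun k : ℕ =>
        ((Nat.factorial k : ℝ) / (t : ℝ) ^ k - ∑ r ∈ Finset.range t, cCoeff r k t) /
          (1 + ∑ r ∈ Finset.Icc 1 (t - 1), cCoeff r k t))
      atTop atTop := by
  have hdenom : Tendsto (fun k : ℕ => 1 + ∑ r ∈ Icc 1 (t - 1), cCoeff r k t) atTop (𝓝 1) := by
    simpa using (tendsto_sum_Icc_cCoeff_zero t).const_add 1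
  simp_rw [sum_range_cCoeff ht]
  exact (tendsto_factorial_div_pow_atTop (by exact_mod_cast ht)).sub_div_self_atTop hdenom one_pos
end

section
/- The maximum of a linear function $y \mapsto \sum_{i=1}^k w_i y_i$ over the $\ell_0$-ball $\mathcal{B}_0^t(\bar{x})$ equals $\sum_{i=1}^k w_i \bar{x}_i$ plus the sum of the $t$ largest values among $d_1^+, \dots, d_k^+$, where $d_i^+ = \max(w_i(b_i - \bar{x}_i), w_i(a_i - \bar{x}_i))$. -/
/-!
Write `y = x + (y - x)`: the objective at `y` is `∑ wᵢ xᵢ` plus the gains `wᵢ (yᵢ - xᵢ)` of the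
at most `t` coordinates where `y` differs from `x`. On `[aᵢ, bᵢ]` the gain is at most `dᵢ⁺`, with
equality at an endpoint, and `dᵢ⁺ ≥ 0` because `xᵢ ∈ [aᵢ, bᵢ]`. A sum of at most `t` of the
nonnegative `dᵢ⁺` is at most the sum of the `t` largest (an exchange argument around the `t`-th
largest value), and moving the `t` top-ranked coordinates to their best endpoints attains it.
-/

open Finset

theorem Finset.sum_le_sum_of_sdiff_le_of_le_sdiff {ι M : Type*} [DecidableEq ι] [AddCommMonoid M]
    [PartialOrder M] [IsOrderedAddMonoid M] {s u : Finset ι} {f : ι → M} (c : M)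
    (hc : 0 ≤ c) (hcard : #s ≤ #u) (hs : ∀ i ∈ s \ u, f i ≤ c) (hu : ∀ i ∈ u \ s, c ≤ f i) :
    ∑ i ∈ s, f i ≤ ∑ i ∈ u, f i :=
  calc ∑ i ∈ s, f i = ∑ i ∈ s ∩ u, f i + ∑ i ∈ s \ u, f i := (sum_inter_add_sum_sdiff s u f).symm
    _ ≤ ∑ i ∈ s ∩ u, f i + #(s \ u) • c := by gcongr; exact sum_le_card_nsmul _ _ _ hs
    _ ≤ ∑ i ∈ u ∩ s, f i + #(u \ s) • c := by
      rw [inter_comm]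
      exact add_le_add le_rfl (nsmul_le_nsmul_left hc (card_sdiff_le_card_sdiff_iff.2 hcard))
    _ ≤ ∑ i ∈ u ∩ s, f i + ∑ i ∈ u \ s, f i := by gcongr; exact card_nsmul_le_sum _ _ _ hu
    _ = ∑ i ∈ u, f i := sum_inter_add_sum_sdiff u s f

theorem Fin.card_filter_val_lt_le (k t : ℕ) : #(univ.filter fun j : Fin k => (j : ℕ) < t) ≤ t :=
  calc #(univ.filter fun j : Fin k => (j : ℕ) < t) ≤ #(range t) :=
        card_le_card_of_injOn (fun j => (j : ℕ)) (fun j hj => by simpa using hj)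
          Fin.val_injective.injOn
    _ = t := card_range t

theorem Fin.sum_le_sum_filter_val_lt_of_antitone {M : Type*} [AddCommMonoid M] [PartialOrder M]
    [IsOrderedAddMonoid M] {k t : ℕ} {f : Fin k → M} (hf : Antitone f) (hf0 : 0 ≤ f)
    {s : Finset (Fin k)} (hs : #s ≤ t) :
    ∑ i ∈ s, f i ≤ ∑ i ∈ univ.filter (fun i : Fin k => (i : ℕ) < t), f i := by
  rcases lt_or_ge t k with htk | hkt
  · have hu : univ.filter (fun i : Fin k => (i : ℕ) < t) = Iio ⟨t, htk⟩ := by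
      ext i; simp [Fin.lt_def]
    rw [hu]
    refine sum_le_sum_of_sdiff_le_of_le_sdiff (f ⟨t, htk⟩) (hf0 _) (by simpa using hs)
      (fun i hi => hf ?_) (fun i hi => hf ?_)
    · simpa using (mem_sdiff.1 hi).2
    · exact (mem_Iio.1 (mem_sdiff.1 hi).1).le
  · have hu : univ.filter (fun i : Fin k => (i : ℕ) < t) = univ := by
      ext i; simpa using i.2.trans_le hkt
    rw [hu]
    exact sum_le_sum_of_subset_of_nonneg (subset_univ s) fun i _ _ => hf0 i

theorem sum_mul_eq_add_sum_mul_sub {ι R : Type*} [Fintype ι] [Ring R] (w x y : ι → R)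
    {T : Finset ι} (h : ∀ i ∉ T, y i = x i) :
    ∑ i, w i * y i = ∑ i, w i * x i + ∑ i ∈ T, w i * (y i - x i) := by
  rw [sum_subset (subset_univ T) fun i _ hi => by rw [h i hi, sub_self, mul_zero],
    ← sum_add_distrib]
  exact sum_congr rfl fun i _ => by rw [mul_sub, add_sub_cancel]

theorem mul_sub_le_max_of_mem_Icc {R : Type*} [Ring R] [LinearOrder R] [IsStrictOrderedRing R]
    {a b c : R} (w x : R) (hc : c ∈ Set.Icc a b) :
    w * (c - x) ≤ max (w * (b - x)) (w * (a - x)) := by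
  rcases le_total 0 w with hw | hw
  · exact le_max_of_le_left (mul_le_mul_of_nonneg_left (sub_le_sub_right hc.2 x) hw)
  · exact le_max_of_le_right (mul_le_mul_of_nonpos_left (sub_le_sub_right hc.1 x) hw)

theorem exists_mem_Icc_mul_sub_eq_max {R : Type*} [Ring R] [LinearOrder R] {a b : R} (w x : R)
    (hab : a ≤ b) :
    ∃ c ∈ Set.Icc a b, w * (c - x) = max (w * (b - x)) (w * (a - x)) := by
  rcases max_choice (w * (b - x)) (w * (a - x)) with h | h
  exacts [⟨b, Set.right_mem_Icc.2 hab, h.symm⟩, ⟨a, Set.left_mem_Icc.2 hab, h.symm⟩]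

theorem isGreatest_linear_l0Ball_general {k : ℕ} (t : ℕ)
    (w a b x : Fin k → ℝ) (hx : ∀ i, a i ≤ x i ∧ x i ≤ b i)
    (σ : Equiv.Perm (Fin k))
    (hσ : ∀ i j : Fin k, i ≤ j →
      max (w (σ j) * (b (σ j) - x (σ j))) (w (σ j) * (a (σ j) - x (σ j))) ≤
        max (w (σ i) * (b (σ i) - x (σ i))) (w (σ i) * (a (σ i) - x (σ i)))) :
    IsGreatest ((fun y : Fin k → ℝ => ∑ i, w i * y i) ''
        {y : Fin k → ℝ | (∀ i, y i ∈ Set.Icc (a i) (b i)) ∧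
          (Finset.univ.filter (fun i => y i ≠ x i)).card ≤ t})
      (∑ i, w i * x i +
        ∑ i ∈ Finset.univ.filter (fun i : Fin k => (i : ℕ) < t),
          max (w (σ i) * (b (σ i) - x (σ i))) (w (σ i) * (a (σ i) - x (σ i)))) := by
  set d : Fin k → ℝ := fun i => max (w i * (b i - x i)) (w i * (a i - x i))
  have hd0 : ∀ i, 0 ≤ d i := fun i => by
    have h := mul_sub_le_max_of_mem_Icc (w i) (x i) (hx i)
    rwa [sub_self, mul_zero] at h
  choose c hcI hcd using fun i =>
    exists_mem_Icc_mul_sub_eq_max (w i) (x i) ((hx i).1.trans (hx i).2)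
  set S := (univ.filter fun j : Fin k => (j : ℕ) < t).map σ.toEmbedding
  refine ⟨⟨S.piecewise c x, ⟨fun i => ?_, ?_⟩, ?_⟩, ?_⟩
  · by_cases hi : i ∈ S <;> simp [hi, hcI, hx]
  · calc #{i | S.piecewise c x i ≠ x i} ≤ #S :=
          card_le_card fun i hi => by
            by_contra hiS
            simp [S.piecewise_eq_of_notMem _ _ hiS] at hi
      _ ≤ t := by rw [card_map]; exact Fin.card_filter_val_lt_le k t
  · dsimp only
    rw [sum_mul_eq_add_sum_mul_sub w x (S.piecewise c x) fun i hi =>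
      S.piecewise_eq_of_notMem _ _ hi, sum_map]
    refine congrArg _ (sum_congr rfl fun j hj => ?_)
    rw [S.piecewise_eq_of_mem _ _ (mem_map_of_mem _ hj)]
    exact hcd (σ j)
  · rintro _ ⟨y, ⟨hyI, hyt⟩, rfl⟩
    set T := ({i | y i ≠ x i} : Finset (Fin k))
    dsimp only
    rw [sum_mul_eq_add_sum_mul_sub w x y (T := T) (by simp [T])]
    gcongr
    calc ∑ i ∈ T, w i * (y i - x i) ≤ ∑ i ∈ T, d i :=
          sum_le_sum fun i _ => mul_sub_le_max_of_mem_Icc (w i) (x i) (hyI i)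
      _ = ∑ j ∈ T.map σ.symm.toEmbedding, d (σ j) := by simp [sum_map]
      _ ≤ ∑ j ∈ univ.filter (fun j : Fin k => (j : ℕ) < t), d (σ j) :=
          Fin.sum_le_sum_filter_val_lt_of_antitone (fun i j hij => hσ i j hij)
            (fun j => hd0 (σ j)) (by simpa using hyt)

/-- The maximum of a linear function over the ℓ₀-ball equals `∑ wᵢ xᵢ` plus the sum of
the `t` largest values among the maximum entry contributions `dᵢ⁺`. -/
theorem isGreatest_linear_l0Ball {k : ℕ} (hk : 1 ≤ k) (t : ℕ) (ht : 1 ≤ t) (htk : t ≤ k)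
    (w a b x : Fin k → ℝ) (hab : ∀ i, a i ≤ b i) (hx : ∀ i, a i ≤ x i ∧ x i ≤ b i)
    (σ : Equiv.Perm (Fin k))
    (hσ : ∀ i j : Fin k, i ≤ j →
      max (w (σ j) * (b (σ j) - x (σ j))) (w (σ j) * (a (σ j) - x (σ j))) ≤
        max (w (σ i) * (b (σ i) - x (σ i))) (w (σ i) * (a (σ i) - x (σ i)))) :
    IsGreatest ((fun y : Fin k → ℝ => ∑ i, w i * y i) ''
        {y : Fin k → ℝ | (∀ i, y i ∈ Set.Icc (a i) (b i)) ∧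
          (Finset.univ.filter (fun i => y i ≠ x i)).card ≤ t})
      (∑ i, w i * x i +
        ∑ i ∈ Finset.univ.filter (fun i : Fin k => (i : ℕ) < t),
          max (w (σ i) * (b (σ i) - x (σ i))) (w (σ i) * (a (σ i) - x (σ i)))) :=
  isGreatest_linear_l0Ball_general t w a b x hx σ hσ
end

section
/- The minimum of a linear function $y \mapsto \sum_{i=1}^k w_i y_i$ over the asymmetrically scaled $\ell_1$-ball $\widetilde{\mathcal{B}}_1^t(\bar{x})$ equals $\sum_{i=1}^k w_i \bar{x}_i + t \cdot \min_{i \in [k]} d_i^-$, where $d_i^- = \min(w_i(b_i - \bar{x}_i), w_i(a_i - \bar{x}_i))$. -/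
open scoped ENNReal

/-!
Every coordinate contributes `wᵢ (yᵢ - xᵢ) = δᵢ · wᵢ (cᵢ - xᵢ) ≥ δᵢ · m` with `cᵢ ∈ {aᵢ, bᵢ}`,
`δᵢ = δ_x̄^i(y)` and `m = minᵢ dᵢ⁻ ≤ 0`; summing and using `∑ δᵢ ≤ t` bounds the linear function
below by `w·x̄ + t m`. The bound is attained by moving only the coordinate `j` realising `m`
to `x̄ⱼ + t (cⱼ - x̄ⱼ)`, whose scaled distance is exactly `t`.
-/

open Finset

section ScaledDistance

variable {k : ℕ} {a b x y : Fin k → ℝ} {i j : Fin k}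

theorem deltaE_of_eq (h : y i = x i) : deltaE a b x i y = 0 := by
  simp [deltaE, h]

theorem deltaE_of_lt_of_ne (h : x i < y i) (hb : b i ≠ x i) :
    deltaE a b x i y = ENNReal.ofReal ((y i - x i) / (b i - x i)) := by
  simp [deltaE, h.ne', h, hb]

theorem deltaE_of_gt_of_ne (h : y i < x i) (ha : a i ≠ x i) :
    deltaE a b x i y = ENNReal.ofReal ((y i - x i) / (a i - x i)) := by
  simp [deltaE, h.ne, h.not_gt, ha]

theorem exists_sub_eq_toReal_deltaE_mul (hx : a i ≤ x i ∧ x i ≤ b i)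
    (hfin : deltaE a b x i y ≠ ⊤) :
    ∃ c, (c = a i ∨ c = b i) ∧ y i - x i = (deltaE a b x i y).toReal * (c - x i) := by
  rcases lt_trichotomy (y i) (x i) with hlt | heq | hgt
  · have ha : a i ≠ x i := fun ha => hfin (by simp [deltaE, hlt.ne, hlt.not_gt, ha])
    have hax : a i - x i < 0 := sub_neg.2 (lt_of_le_of_ne hx.1 ha)
    refine ⟨a i, .inl rfl, ?_⟩
    rw [deltaE_of_gt_of_ne hlt ha,
      ENNReal.toReal_ofReal (div_nonneg_of_nonpos (by linarith) hax.le),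
      div_mul_cancel₀ _ hax.ne]
  · exact ⟨a i, .inl rfl, by simp [deltaE_of_eq heq, heq]⟩
  · have hb : b i ≠ x i := fun hb => hfin (by simp [deltaE, hgt.ne', hgt, hb])
    have hbx : 0 < b i - x i := sub_pos.2 (lt_of_le_of_ne hx.2 hb.symm)
    refine ⟨b i, .inr rfl, ?_⟩
    rw [deltaE_of_lt_of_ne hgt hb, ENNReal.toReal_ofReal (div_nonneg (by linarith) hbx.le),
      div_mul_cancel₀ _ hbx.ne']

theorem sum_deltaE_add_single_le {c s : ℝ} (hx : a j ≤ x j ∧ x j ≤ b j) (hc : c = a j ∨ c = b j)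
    (hs : 0 ≤ s) :
    ∑ i, deltaE a b x i (x + Pi.single j (s * (c - x j))) ≤ ENNReal.ofReal s := by
  set y := x + Pi.single j (s * (c - x j))
  rw [Fintype.sum_eq_single j fun i hi => deltaE_of_eq (by simp [y, Pi.single_eq_of_ne hi])]
  have hyj : y j - x j = s * (c - x j) := by simp [y]
  rcases eq_or_ne (y j) (x j) with h | h
  · exact (deltaE_of_eq h).trans_le zero_le
  have hmove : s * (c - x j) ≠ 0 := hyj ▸ sub_ne_zero.2 h
  have hcx : c - x j ≠ 0 := right_ne_zero_of_mul hmove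
  have hspos : 0 < s := lt_of_le_of_ne hs (left_ne_zero_of_mul hmove).symm
  rcases hc with rfl | rfl
  · have hax : a j - x j < 0 := sub_neg.2 (lt_of_le_of_ne hx.1 (sub_ne_zero.1 hcx))
    have hlt : y j < x j := sub_neg.1 (hyj ▸ mul_neg_of_pos_of_neg hspos hax)
    rw [deltaE_of_gt_of_ne hlt (sub_ne_zero.1 hcx), hyj, mul_div_cancel_right₀ _ hcx]
  · have hbx : 0 < b j - x j := sub_pos.2 (lt_of_le_of_ne hx.2 (sub_ne_zero.1 hcx).symm)
    have hgt : x j < y j := sub_pos.1 (hyj ▸ mul_pos hspos hbx)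
    rw [deltaE_of_lt_of_ne hgt (sub_ne_zero.1 hcx), hyj, mul_div_cancel_right₀ _ hcx]

end ScaledDistance

theorem min_mul_sub_nonpos {w a b x : ℝ} (hx : a ≤ x ∧ x ≤ b) :
    min (w * (b - x)) (w * (a - x)) ≤ 0 := by
  rcases le_total 0 w with hw | hw
  · exact (min_le_right _ _).trans (mul_nonpos_of_nonneg_of_nonpos hw (by linarith))
  · exact (min_le_left _ _).trans (mul_nonpos_of_nonpos_of_nonneg hw (by linarith))

theorem sum_mul_add_le_of_sum_deltaE_le {k : ℕ} {w a b x y : Fin k → ℝ} {m t : ℝ}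
    (hx : ∀ i, a i ≤ x i ∧ x i ≤ b i) (ht : 0 ≤ t)
    (hm : ∀ i, m ≤ min (w i * (b i - x i)) (w i * (a i - x i))) (hm0 : m ≤ 0)
    (hy : ∑ i, deltaE a b x i y ≤ ENNReal.ofReal t) :
    ∑ i, w i * x i + t * m ≤ ∑ i, w i * y i := by
  set δ := fun i => (deltaE a b x i y).toReal
  have hfin : ∀ i, deltaE a b x i y ≠ ⊤ := fun i =>
    ne_top_of_le_ne_top ENNReal.ofReal_ne_top
      ((single_le_sum (fun _ _ => zero_le) (mem_univ i)).trans hy)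
  have hδsum : ∑ i, δ i ≤ t := by
    rw [← ENNReal.toReal_sum fun i _ => hfin i]
    exact ENNReal.toReal_le_of_le_ofReal ht hy
  have hcoord : ∀ i, w i * x i + δ i * m ≤ w i * y i := by
    intro i
    obtain ⟨c, hc, hyc⟩ := exists_sub_eq_toReal_deltaE_mul (hx i) (hfin i)
    have hmc : m ≤ w i * (c - x i) :=
      (hm i).trans (by rcases hc with rfl | rfl; exacts [min_le_right _ _, min_le_left _ _])
    have hyc' : y i - x i = δ i * (c - x i) := hyc
    calc w i * x i + δ i * m ≤ w i * x i + δ i * (w i * (c - x i)) := by gcongr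
      _ = w i * y i := by linear_combination (-w i) * hyc'
  calc ∑ i, w i * x i + t * m
      ≤ ∑ i, w i * x i + (∑ i, δ i) * m :=
        add_le_add_right (mul_le_mul_of_nonpos_right hδsum hm0) _
    _ = ∑ i, (w i * x i + δ i * m) := by rw [sum_add_distrib, sum_mul]
    _ ≤ ∑ i, w i * y i := sum_le_sum fun i _ => hcoord i

theorem isLeast_linear_scaledL1Ball_general {k : ℕ} (hk : 0 < k) (t : ℕ)
    (w a b x : Fin k → ℝ) (hx : ∀ i, a i ≤ x i ∧ x i ≤ b i) :
    IsLeast ((fun y : Fin k → ℝ => ∑ i, w i * y i) ''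
        {y : Fin k → ℝ | ∑ i, deltaE a b x i y ≤ (t : ℝ≥0∞)})
      (∑ i, w i * x i +
        (t : ℝ) *
          Finset.univ.inf' (Finset.univ_nonempty_iff.mpr (Fin.pos_iff_nonempty.mp hk))
            (fun i => min (w i * (b i - x i)) (w i * (a i - x i)))) := by
  set d := fun i => min (w i * (b i - x i)) (w i * (a i - x i))
  have hball : (t : ℝ≥0∞) = ENNReal.ofReal t := (ENNReal.ofReal_natCast t).symm
  refine ⟨?_, ?_⟩
  · obtain ⟨j, -, hj⟩ := exists_mem_eq_inf' (univ_nonempty_iff.mpr (Fin.pos_iff_nonempty.mp hk)) d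
    obtain ⟨c, hc, hdc⟩ : ∃ c, (c = a j ∨ c = b j) ∧ d j = w j * (c - x j) := by
      rcases min_choice (w j * (b j - x j)) (w j * (a j - x j)) with h | h
      exacts [⟨b j, .inr rfl, h⟩, ⟨a j, .inl rfl, h⟩]
    refine ⟨x + Pi.single j (t * (c - x j)), ?_, ?_⟩
    · rw [Set.mem_ofPred_eq, hball]
      exact sum_deltaE_add_single_le (hx j) hc t.cast_nonneg
    · change w ⬝ᵥ (x + Pi.single j _) = _
      rw [dotProduct_add, dotProduct_single, hj, hdc]
      simp only [dotProduct]
      ring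
  · rintro _ ⟨y, hy, rfl⟩
    rw [Set.mem_ofPred_eq, hball] at hy
    obtain ⟨i₀⟩ := Fin.pos_iff_nonempty.mp hk
    exact sum_mul_add_le_of_sum_deltaE_le hx t.cast_nonneg (fun i => inf'_le d (mem_univ i))
      ((inf'_le d (mem_univ i₀)).trans (min_mul_sub_nonpos (hx i₀))) hy

/-- The minimum of a linear function over the asymmetrically scaled ℓ₁-ball equals
`∑ wᵢ xᵢ + t · minᵢ dᵢ⁻`. -/
theorem isLeast_linear_scaledL1Ball {k : ℕ} (hk : 0 < k) (t : ℕ) (ht : 1 ≤ t) (htk : t ≤ k)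
    (w a b x : Fin k → ℝ) (hab : ∀ i, a i ≤ b i) (hx : ∀ i, a i ≤ x i ∧ x i ≤ b i) :
    IsLeast ((fun y : Fin k → ℝ => ∑ i, w i * y i) ''
        {y : Fin k → ℝ | ∑ i, deltaE a b x i y ≤ (t : ℝ≥0∞)})
      (∑ i, w i * x i +
        (t : ℝ) *
          Finset.univ.inf' (Finset.univ_nonempty_iff.mpr (Fin.pos_iff_nonempty.mp hk))
            (fun i => min (w i * (b i - x i)) (w i * (a i - x i)))) :=
  isLeast_linear_scaledL1Ball_general hk t w a b x hx
end

section
/- The Lebesgue measure of $\Delta_{k,d,t} = \{z \in ([0,\infty)^d)^k \mid \sum_{i=1}^k \max_{j \in [d]} z_i^{(j)} \leq t\}$ in $\mathbb{R}^{dk}$ equals $\frac{t^{dk} (d!)^k}{(dk)!}$. -/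
/-!
Sorting the coordinates inside each channel cuts `Δ_{k,d,t}` into `(d!)^k` pieces that are
congruent under coordinate permutations and overlap only in a null set. On the piece where every
channel is increasing, the maximum of a channel is its last coordinate, and the partial-sum map
(lower unitriangular, hence volume preserving) identifies that piece with the corner simplex
`{y ≥ 0, ∑ y ≤ t}` of dimension `dk`. The volume `t^n / n!` of the corner simplex comes from the
same decomposition applied to a single channel, where `Δ` is the cube `[0, t]^n`.
-/

open MeasureTheory Finset Function
open scoped ENNReal Nat

namespace MultiChannelSimplex

def cornerSimplex (ι : Type*) [Fintype ι] (t : ℝ) : Set (ι → ℝ) :=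
  {y | (∀ i, 0 ≤ y i) ∧ ∑ i, y i ≤ t}

/-- The paper's `Δ_{k,d,t}`, with the `k` channels indexed by `ι`. -/
def multiSimplex (ι : Type*) [Fintype ι] (d : ℕ) [NeZero d] (t : ℝ) : Set (ι → Fin d → ℝ) :=
  {z | (∀ i j, 0 ≤ z i j) ∧ ∑ i, univ.sup' univ_nonempty (z i) ≤ t}

section PartialSums

variable {ι : Type*} [LinearOrder ι] [LocallyFiniteOrderBot ι]

noncomputable def partialSums : (ι → ℝ) →ₗ[ℝ] ι → ℝ :=
  LinearMap.pi fun i => ∑ j ∈ Iic i, LinearMap.proj j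

@[simp]
lemma partialSums_apply (y : ι → ℝ) (i : ι) : partialSums y i = ∑ j ∈ Iic i, y j := by
  simp [partialSums]

lemma monotone_partialSums {y : ι → ℝ} (hy : ∀ j, 0 ≤ y j) : Monotone (partialSums y) :=
  fun _ _ hab => by
    simpa using sum_le_sum_of_subset_of_nonneg (Iic_subset_Iic.mpr hab) fun j _ _ => hy j

lemma partialSums_nonneg {y : ι → ℝ} (hy : ∀ j, 0 ≤ y j) (i : ι) : 0 ≤ partialSums y i := by
  simpa using sum_nonneg fun j _ => hy j

lemma nonneg_of_monotone_partialSums [PredOrder ι] {y : ι → ℝ}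
    (h0 : ∀ i, 0 ≤ partialSums y i) (hmono : Monotone (partialSums y)) (j : ι) : 0 ≤ y j := by
  have hj : partialSums y j = ∑ i ∈ Iio j, y i + y j := by
    rw [partialSums_apply, Iic_eq_cons_Iio, sum_cons, add_comm]
  by_cases hmin : IsMin j
  · simpa [hj, Iio_eq_empty.mpr hmin] using h0 j
  · have hpred : ∑ i ∈ Iio j, y i = partialSums y (Order.pred j) := by
      rw [partialSums_apply, Iic_pred_eq_Iio_of_not_isMin hmin]
    linarith [hmono (Order.pred_le j)]

lemma partialSums_top [OrderTop ι] [Fintype ι] (y : ι → ℝ) : partialSums y ⊤ = ∑ j, y j := by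
  rw [partialSums_apply, Iic_top]

lemma sup'_partialSums [OrderTop ι] [Fintype ι] {y : ι → ℝ} (hy : ∀ j, 0 ≤ y j) :
    univ.sup' ⟨⊤, mem_univ _⟩ (partialSums y) = ∑ j, y j := by
  rw [← partialSums_top]
  exact le_antisymm (sup'_le _ _ fun j _ => monotone_partialSums hy le_top) (le_sup' _ (mem_univ ⊤))

lemma det_partialSums [Fintype ι] : LinearMap.det (partialSums : (ι → ℝ) →ₗ[ℝ] ι → ℝ) = 1 := by
  rw [← LinearMap.det_toMatrix']
  have hentry : ∀ i j : ι, LinearMap.toMatrix' partialSums i j = if j ≤ i then (1 : ℝ) else 0 := by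
    intro i j
    simp [LinearMap.toMatrix'_apply, Pi.single_apply]
  rw [Matrix.det_of_isLowerTriangular _ fun i j hij => ?_]
  · simp [hentry]
  · simpa [hentry] using hij

lemma measurePreserving_partialSums [Fintype ι] :
    MeasurePreserving (partialSums : (ι → ℝ) →ₗ[ℝ] ι → ℝ) volume volume where
  measurable := (LinearMap.continuous_of_finiteDimensional _).measurable
  map_eq := by
    rw [Measure.map_linearMap_addHaar_eq_smul_addHaar _ (by simp [det_partialSums]),
      det_partialSums]
    simp

end PartialSums

section Sorting

variable {ι : Type*} [Fintype ι] {n : ℕ}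

def permuteBlocks (σ : ι → Equiv.Perm (Fin n)) (z : ι → Fin n → ℝ) : ι → Fin n → ℝ :=
  fun i => z i ∘ σ i

lemma measurePreserving_permuteBlocks (σ : ι → Equiv.Perm (Fin n)) :
    MeasurePreserving (permuteBlocks σ) volume volume :=
  volume_preserving_pi fun i => (volume_measurePreserving_piCongrLeft (fun _ => ℝ) (σ i)).symm

lemma volume_setOf_apply_eq_apply {i : ι} {a b : Fin n} (hab : a ≠ b) :
    volume {z : ι → Fin n → ℝ | z i a = z i b} = 0 := by
  let L : (ι → Fin n → ℝ) →ₗ[ℝ] ℝ :=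
    ((LinearMap.proj a : (Fin n → ℝ) →ₗ[ℝ] ℝ) - LinearMap.proj b) ∘ₗ LinearMap.proj i
  have hL : L ≠ 0 := fun h => by
    simpa [L, hab.symm] using LinearMap.congr_fun h fun _ j => if j = a then 1 else 0
  have hker : {z : ι → Fin n → ℝ | z i a = z i b} = LinearMap.ker L := by
    ext z
    simp [L, sub_eq_zero]
  rw [hker]
  exact Measure.addHaar_submodule _ _ (mt LinearMap.ker_eq_top.mp hL)

lemma volume_setOf_exists_not_injective :
    volume {z : ι → Fin n → ℝ | ∃ i, ¬ Injective (z i)} = 0 := by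
  have hsub : {z : ι → Fin n → ℝ | ∃ i, ¬ Injective (z i)} ⊆
      ⋃ (i) (a) (b) (_ : a ≠ b), {z | z i a = z i b} := by
    rintro z ⟨i, hi⟩
    obtain ⟨a, b, hab, hne⟩ : ∃ a b, z i a = z i b ∧ a ≠ b := by
      simpa [Injective] using hi
    simp only [Set.mem_iUnion]
    exact ⟨i, a, b, hne, hab⟩
  refine measure_mono_null hsub ?_
  simp only [measure_iUnion_null_iff]
  exact fun i a b hab => volume_setOf_apply_eq_apply hab

lemma measurableSet_setOf_forall_monotone :
    MeasurableSet {z : ι → Fin n → ℝ | ∀ i, Monotone (z i)} := by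
  simp only [Set.ofPred_forall]
  refine .iInter fun i => IsClosed.measurableSet ?_
  exact isClosed_monotone.preimage (f := fun z : ι → Fin n → ℝ => z i) (continuous_apply i)

/-- Sorting each block of coordinates cuts a set invariant under blockwise permutations into
`(n!) ^ card ι` congruent pieces, which overlap only where some block has a repeated entry. -/
theorem volume_eq_factorial_pow_mul_volume_inter_monotone {S : Set (ι → Fin n → ℝ)}
    (hS : MeasurableSet S) (hperm : ∀ σ, permuteBlocks σ ⁻¹' S = S) :
    volume S = (n ! : ℝ≥0∞) ^ Fintype.card ι * volume (S ∩ {z | ∀ i, Monotone (z i)}) := by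
  set M : Set (ι → Fin n → ℝ) := {z | ∀ i, Monotone (z i)}
  have hM : MeasurableSet M := measurableSet_setOf_forall_monotone
  let P : (ι → Equiv.Perm (Fin n)) → Set (ι → Fin n → ℝ) := fun σ => permuteBlocks σ ⁻¹' (S ∩ M)
  have hcover : S = ⋃ σ, P σ := by
    ext z
    simp only [P, Set.mem_iUnion, Set.preimage_inter, hperm, Set.mem_inter_iff]
    exact ⟨fun hz => ⟨fun i => Tuple.sort (z i), hz, fun i => Tuple.monotone_sort (z i)⟩,
      fun ⟨_, hz, _⟩ => hz⟩
  have hdisj : Pairwise (AEDisjoint volume on P) := by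
    intro σ τ hστ
    refine measure_mono_null ?_ volume_setOf_exists_not_injective
    rintro z ⟨⟨-, hσ⟩, ⟨-, hτ⟩⟩
    by_contra hz
    have hinj : ∀ i, Injective (z i) := by simpa using hz
    exact hστ <| funext fun i => Equiv.ext fun j =>
      hinj i (congrFun (Tuple.unique_monotone (hσ i) (hτ i)) j)
  have hpiece : ∀ σ, volume (P σ) = volume (S ∩ M) := fun σ =>
    (measurePreserving_permuteBlocks σ).measure_preimage (hS.inter hM).nullMeasurableSet
  rw [congrArg volume hcover, measure_iUnion₀ hdisj fun σ =>
    ((hS.inter hM).preimage (measurePreserving_permuteBlocks σ).measurable).nullMeasurableSet]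
  simp [hpiece, Fintype.card_perm]

end Sorting

lemma volume_measurePreserving_curry_symm (ι κ : Type*) [Fintype ι] [Fintype κ] :
    MeasurePreserving (MeasurableEquiv.curry ι κ ℝ).symm volume volume where
  measurable := (MeasurableEquiv.curry ι κ ℝ).symm.measurable
  map_eq := by
    refine (Measure.pi_eq fun s hs => ?_).symm
    have hpre : uncurry ⁻¹' Set.univ.pi s = Set.univ.pi fun i => Set.univ.pi fun j => s (i, j) := by
      ext z
      simp
    rw [MeasurableEquiv.map_apply, MeasurableEquiv.coe_curry_symm, hpre]
    simp [volume_pi_pi, Fintype.prod_prod_type]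

lemma volume_cornerSimplex_congr {ι κ : Type*} [Fintype ι] [Fintype κ] (e : ι ≃ κ) (t : ℝ) :
    volume (cornerSimplex ι t) = volume (cornerSimplex κ t) := by
  have hpre : (MeasurableEquiv.piCongrLeft (fun _ => ℝ) e).symm ⁻¹' cornerSimplex ι t =
      cornerSimplex κ t := by
    ext x
    change (∀ i, 0 ≤ x (e i)) ∧ ∑ i, x (e i) ≤ t ↔ _
    rw [e.forall_congr_right (q := fun k => 0 ≤ x k), e.sum_comp]
    rfl
  rw [← hpre, (volume_measurePreserving_piCongrLeft (fun _ => ℝ) e).symm.measure_preimage_equiv]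

section MultiSimplex

variable {ι : Type*} [Fintype ι] {d : ℕ} [NeZero d] {t : ℝ}

lemma isClosed_multiSimplex : IsClosed (multiSimplex ι d t) := by
  have hsup : ∀ i, Continuous fun z : ι → Fin d → ℝ => univ.sup' univ_nonempty (z i) :=
    fun i => Continuous.finset_sup'_apply _ fun j _ => by fun_prop
  exact (isClosed_le continuous_const continuous_id).inter
    (isClosed_le (continuous_finsetSum _ fun i _ => hsup i) continuous_const)

lemma permuteBlocks_preimage_multiSimplex (σ : ι → Equiv.Perm (Fin d)) :
    permuteBlocks σ ⁻¹' multiSimplex ι d t = multiSimplex ι d t := by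
  ext z
  simp [multiSimplex, permuteBlocks, sup'_univ_eq_ciSup, Equiv.iSup_comp,
    fun i => (σ i).forall_congr_right (q := fun j => 0 ≤ z i j)]

lemma partialSums_preimage_multiSimplex_inter_monotone :
    (fun y i => partialSums (y i)) ⁻¹' (multiSimplex ι d t ∩ {z | ∀ i, Monotone (z i)}) =
      uncurry ⁻¹' cornerSimplex (ι × Fin d) t := by
  ext y
  simp only [Set.mem_preimage, Set.mem_inter_iff, multiSimplex, cornerSimplex, Set.mem_ofPred_eq,
    Prod.forall, uncurry_apply_pair, Fintype.sum_prod_type]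
  constructor
  · rintro ⟨⟨h0, hsum⟩, hmono⟩
    have hy : ∀ i j, 0 ≤ y i j := fun i => nonneg_of_monotone_partialSums (h0 i) (hmono i)
    simp only [sup'_partialSums (hy _)] at hsum
    exact ⟨hy, hsum⟩
  · rintro ⟨hy, hsum⟩
    refine ⟨⟨fun i => partialSums_nonneg (hy i), ?_⟩, fun i => monotone_partialSums (hy i)⟩
    simpa only [sup'_partialSums (hy _)] using hsum

theorem volume_multiSimplex :
    volume (multiSimplex ι d t) =
      (d ! : ℝ≥0∞) ^ Fintype.card ι * volume (cornerSimplex (ι × Fin d) t) := by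
  have hsorted : MeasurableSet (multiSimplex ι d t ∩ {z | ∀ i, Monotone (z i)}) :=
    isClosed_multiSimplex.measurableSet.inter measurableSet_setOf_forall_monotone
  rw [volume_eq_factorial_pow_mul_volume_inter_monotone isClosed_multiSimplex.measurableSet
      permuteBlocks_preimage_multiSimplex,
    ← (volume_measurePreserving_curry_symm ι (Fin d)).measure_preimage_equiv,
    MeasurableEquiv.coe_curry_symm, ← partialSums_preimage_multiSimplex_inter_monotone,
    (volume_preserving_pi fun _ => measurePreserving_partialSums).measure_preimage
      hsorted.nullMeasurableSet]

lemma multiSimplex_unit (n : ℕ) [NeZero n] (t : ℝ) :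
    multiSimplex Unit n t = Set.univ.pi fun _ => Set.univ.pi fun _ => Set.Icc 0 t := by
  ext z
  simp [multiSimplex, -Set.pi_univ_Icc, forall_and, Unique.forall_iff]

end MultiSimplex

theorem volume_cornerSimplex (ι : Type*) [Fintype ι] {t : ℝ} (ht : 0 ≤ t) :
    volume (cornerSimplex ι t) =
      ENNReal.ofReal (t ^ Fintype.card ι / (Fintype.card ι)!) := by
  obtain hι | hι := isEmpty_or_nonempty ι
  · have huniv : cornerSimplex ι t = Set.univ := by
      ext y
      simp [cornerSimplex, ht]
    simp [huniv, volume_pi]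
  · set n := Fintype.card ι
    have : NeZero n := ⟨Fintype.card_ne_zero⟩
    have hcube := volume_multiSimplex (ι := Unit) (d := n) (t := t)
    rw [multiSimplex_unit, volume_pi_pi, Fintype.card_unit, pow_one,
      ← volume_cornerSimplex_congr ((Fintype.equivFin ι).trans (Equiv.punitProd _).symm)] at hcube
    simp only [volume_pi_pi, Real.volume_Icc, sub_zero, prod_const, card_univ,
      Fintype.card_fin, Fintype.card_unit, pow_one] at hcube
    rw [ENNReal.ofReal_div_of_pos (by positivity), ENNReal.ofReal_pow ht, ENNReal.ofReal_natCast,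
      ENNReal.eq_div_iff (by positivity) (ENNReal.natCast_ne_top _), hcube]

end MultiChannelSimplex

open MultiChannelSimplex in
theorem volume_multiChannel_simplex_general {k d : ℕ} (hd : 0 < d)
    (t : ℝ) (ht : 0 < t) :
    MeasureTheory.volume
        {z : Fin k → Fin d → ℝ | (∀ i j, 0 ≤ z i j) ∧
          ∑ i, Finset.univ.sup' (Finset.univ_nonempty_iff.mpr (Fin.pos_iff_nonempty.mp hd))
            (fun j => z i j) ≤ t} =
      ENNReal.ofReal (t ^ (d * k) * (Nat.factorial d : ℝ) ^ k / (Nat.factorial (d * k))) := by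
  have : NeZero d := ⟨hd.ne'⟩
  change volume (multiSimplex (Fin k) d t) = _
  rw [volume_multiSimplex, volume_cornerSimplex _ ht.le, Fintype.card_prod, Fintype.card_fin,
    Fintype.card_fin, ← ENNReal.ofReal_natCast, ← ENNReal.ofReal_pow (by positivity),
    ← ENNReal.ofReal_mul (by positivity), mul_comm k d]
  congr 1
  ring

/-- `vol(Δ_{k,d,t}) = t^{dk} (d!)^k / (dk)!`. -/
theorem volume_multiChannel_simplex {k d : ℕ} (hk : 1 ≤ k) (hd : 0 < d)
    (t : ℝ) (ht : 0 < t) :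
    MeasureTheory.volume
        {z : Fin k → Fin d → ℝ | (∀ i j, 0 ≤ z i j) ∧
          ∑ i, Finset.univ.sup' (Finset.univ_nonempty_iff.mpr (Fin.pos_iff_nonempty.mp hd))
            (fun j => z i j) ≤ t} =
      ENNReal.ofReal (t ^ (d * k) * (Nat.factorial d : ℝ) ^ k / (Nat.factorial (d * k))) :=
  volume_multiChannel_simplex_general hd t ht
end
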